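/- For k ≥ 3, the number of connected components of the proper enhanced power graph G_E**(Q_{2^k}) of the generalized quaternion group Q_{2^k} is 2^{k-2} + 1. -/

import Mathlib

/-!
Write `Q_{4n}` for `QuaternionGroup n`, with `n = 2 ^ s ≥ 2`. Its only involution is `a n`, and
since `Q_{4n}` is a 2-group every nontrivial cyclic subgroup contains an involution, hence contains
`a n`; so `1` and `a n` are dominating vertices of the enhanced power graph, and nothing else is,
because `⟨xa j⟩ = {1, a n, xa j, xa (j + n)}` contains no other `a i`. After removing them, the
remaining `a i` form a clique inside `⟨a 1⟩`, no `a i` is adjacent to any `xa j`, and `xa i` is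
adjacent exactly to `xa (i + n)`. The components are therefore the cyclic part and the `n` pairs
`{xa i, xa (i + n)}`, indexed by `i mod n`.
-/

open SimpleGraph

/-- The enhanced power graph of a group `G`: distinct `x, y` are adjacent iff
both lie in a common cyclic subgroup `⟨w⟩`. -/
def enhancedPowerGraph (G : Type*) [Group G] : SimpleGraph G where
  Adj x y := x ≠ y ∧ ∃ w : G, x ∈ Subgroup.zpowers w ∧ y ∈ Subgroup.zpowers w
  symm := by
    constructor
    rintro x y ⟨hxy, w, hx, hy⟩
    exact ⟨hxy.symm, w, hy, hx⟩
  loopless := by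
    constructor
    rintro x ⟨hxx, -⟩
    exact hxx rfl

/-- The set of dominating vertices of a graph: vertices adjacent to every other vertex. -/
def SimpleGraph.domVerts {V : Type*} (Γ : SimpleGraph V) : Set V :=
  {v | ∀ u, u ≠ v → Γ.Adj v u}

/-- The proper enhanced power graph: the enhanced power graph induced on the complement of
its set of dominating vertices. -/
def properEnhancedPowerGraph (G : Type*) [Group G] :
    SimpleGraph ((enhancedPowerGraph G).domVertsᶜ : Set G) :=
  SimpleGraph.induce ((enhancedPowerGraph G).domVertsᶜ) (enhancedPowerGraph G)

/-- A total (strongly) dominating set: every vertex has a neighbor in `D`. -/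
def SimpleGraph.IsTotalDominatingSet {V : Type*} (Γ : SimpleGraph V) (D : Set V) : Prop :=
  ∀ v : V, ∃ u ∈ D, Γ.Adj v u

/-- The strong domination number: minimum size of a total dominating set. -/
noncomputable def SimpleGraph.strongDominationNumber {V : Type*} (Γ : SimpleGraph V) : ℕ :=
  sInf {n : ℕ | ∃ D : Set V, Γ.IsTotalDominatingSet D ∧ D.ncard = n}

/-- A dominating set: every vertex not in `D` has a neighbor in `D`. -/
def SimpleGraph.IsDominatingSet {V : Type*} (Γ : SimpleGraph V) (D : Set V) : Prop :=
  ∀ v ∉ D, ∃ u ∈ D, Γ.Adj v u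

/-- The domination number: minimum size of a dominating set. -/
noncomputable def SimpleGraph.dominationNumber {V : Type*} (Γ : SimpleGraph V) : ℕ :=
  sInf {n : ℕ | ∃ D : Set V, Γ.IsDominatingSet D ∧ D.ncard = n}

/-- `G` is a generalized quaternion group `Q_{2^k}` for some `k ≥ 3`. -/
def IsGeneralizedQuaternion (G : Type*) [Group G] : Prop :=
  ∃ k : ℕ, 3 ≤ k ∧ Nonempty (G ≃* QuaternionGroup (2 ^ (k - 2)))

/-- The number of subgroups of `G` of order `p`. -/
noncomputable def numSubgroupsOfOrder (G : Type*) [Group G] (p : ℕ) : ℕ :=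
  Nat.card {H : Subgroup G // Nat.card H = p}

theorem IsPGroup.exists_mem_zpowers_orderOf_eq {p : ℕ} [Fact p.Prime] {G : Type*} [Group G]
    [Finite G] (hG : IsPGroup p G) {g : G} (hg : g ≠ 1) :
    ∃ h ∈ Subgroup.zpowers g, orderOf h = p := by
  obtain ⟨k, hk⟩ := IsPGroup.iff_orderOf.mp hG g
  have hk0 : k ≠ 0 := by
    rintro rfl
    exact hg (orderOf_eq_one_iff.mp (by simpa using hk))
  obtain ⟨h, hh⟩ := exists_prime_orderOf_dvd_card' (G := Subgroup.zpowers g) p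
    (by rw [Nat.card_zpowers, hk]; exact dvd_pow_self p hk0)
  exact ⟨h, h.2, by rwa [Subgroup.orderOf_coe]⟩

theorem SimpleGraph.Reachable.eq_of_forall_adj {V β : Type*} {G : SimpleGraph V} (f : V → β)
    (hf : ∀ u v, G.Adj u v → f u = f v) {u v : V} (h : G.Reachable u v) : f u = f v := by
  rw [reachable_iff_reflTransGen] at h
  induction h with
  | refl => rfl
  | tail _ hadj ih => exact ih.trans (hf _ _ hadj)

theorem SimpleGraph.natCard_connectedComponent_eq_of_reachable_iff {V β : Type*}
    {G : SimpleGraph V} (f : V → β) (hf : Function.Surjective f)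
    (hreach : ∀ u v, G.Reachable u v ↔ f u = f v) :
    Nat.card G.ConnectedComponent = Nat.card β := by
  refine Nat.card_eq_of_bijective (ConnectedComponent.lift f fun u v p _ ↦
    (hreach u v).mp p.reachable) ⟨fun C D hCD ↦ ?_, fun b ↦ ?_⟩
  · induction C, D using ConnectedComponent.ind₂ with
    | h u v => exact ConnectedComponent.sound ((hreach u v).mpr hCD)
  · obtain ⟨v, rfl⟩ := hf b
    exact ⟨G.connectedComponentMk v, rfl⟩

namespace ZMod

variable {n : ℕ}

theorem natCast_add_self_eq_zero (n : ℕ) : (n : ZMod (2 * n)) + n = 0 := by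
  rw [← two_mul]
  exact_mod_cast natCast_self (2 * n)

theorem eq_zero_or_eq_of_dvd_val [NeZero n] {x : ZMod (2 * n)} (h : n ∣ x.val) :
    x = 0 ∨ x = n := by
  obtain ⟨c, hc⟩ := h
  have hc2 : c < 2 := by
    have := x.val_lt
    by_contra!
    nlinarith [NeZero.pos n]
  rw [← natCast_zmod_val x, hc]
  interval_cases c <;> simp

theorem eq_zero_or_eq_of_two_mul_eq_zero [NeZero n] {x : ZMod (2 * n)} (h : 2 * x = 0) :
    x = 0 ∨ x = n := by
  refine eq_zero_or_eq_of_dvd_val (Nat.dvd_of_mul_dvd_mul_left two_pos ?_)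
  rw [← natCast_eq_zero_iff]
  simpa using h

theorem eq_or_eq_add_of_castHom_eq [NeZero n] {i j : ZMod (2 * n)}
    (h : castHom (dvd_mul_left n 2) (ZMod n) i = castHom (dvd_mul_left n 2) (ZMod n) j) :
    j = i ∨ j = i + n := by
  have hdvd : n ∣ (j - i).val := by
    rw [← natCast_eq_zero_iff, ← cast_eq_val, ← castHom_apply (h := dvd_mul_left n 2),
      map_sub, h, sub_self]
  rcases eq_zero_or_eq_of_dvd_val hdvd with hji | hji
  · exact Or.inl (sub_eq_zero.mp hji)
  · exact Or.inr (sub_eq_iff_eq_add'.mp hji)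

end ZMod

namespace QuaternionGroup

variable {n : ℕ}

@[simp]
theorem xa_ne_one (i : ZMod (2 * n)) : xa i ≠ (1 : QuaternionGroup n) := nofun

theorem a_pow (i : ZMod (2 * n)) (k : ℕ) :
    (a i : QuaternionGroup n) ^ k = a ((k : ZMod (2 * n)) * i) := by
  induction k with
  | zero => simp
  | succ k ih => rw [pow_succ, ih, a_mul_a, Nat.cast_succ, add_one_mul]

theorem xa_pow_three (i : ZMod (2 * n)) :
    (xa i : QuaternionGroup n) ^ 3 = xa (i + (n : ZMod (2 * n))) := by
  rw [pow_succ, xa_sq, a_mul_xa, sub_eq_add_neg, neg_eq_of_add_eq_zero_left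
    (ZMod.natCast_add_self_eq_zero n)]

theorem xa_notMem_zpowers_a [NeZero n] (i j : ZMod (2 * n)) :
    xa j ∉ Subgroup.zpowers (a i : QuaternionGroup n) := fun h ↦ by
  obtain ⟨k, hk⟩ := mem_powers_iff_mem_zpowers.mpr h
  cases (a_pow i k).symm.trans hk

theorem mem_zpowers_xa_iff [NeZero n] {x : QuaternionGroup n} {i : ZMod (2 * n)} :
    x ∈ Subgroup.zpowers (xa i) ↔
      x = 1 ∨ x = a n ∨ x = xa i ∨ x = xa (i + (n : ZMod (2 * n))) := by
  constructor
  · intro hx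
    obtain ⟨k, rfl⟩ := mem_powers_iff_mem_zpowers.mpr hx
    dsimp only
    rw [← pow_mod_orderOf, orderOf_xa]
    have hk : k % 4 < 4 := Nat.mod_lt _ (by norm_num)
    interval_cases k % 4 <;> simp [xa_sq, xa_pow_three]
  · rintro (rfl | rfl | rfl | rfl)
    · exact Subgroup.one_mem _
    · exact xa_sq i ▸ Subgroup.pow_mem _ (Subgroup.mem_zpowers _) 2
    · exact Subgroup.mem_zpowers _
    · exact xa_pow_three i ▸ Subgroup.pow_mem _ (Subgroup.mem_zpowers _) 3

theorem eq_a_of_orderOf_eq_two [NeZero n] {g : QuaternionGroup n} (hg : orderOf g = 2) :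
    g = a n := by
  cases g with
  | xa i => simp [orderOf_xa] at hg
  | a i =>
    have hsq : a (((2 : ℕ) : ZMod (2 * n)) * i) = a 0 := by
      rw [← a_pow, ← one_def, ← hg, pow_orderOf_eq_one]
    rcases ZMod.eq_zero_or_eq_of_two_mul_eq_zero (by exact_mod_cast a.inj hsq) with rfl | rfl
    · simp at hg
    · rfl

theorem a_mem_zpowers_of_ne_one [NeZero n] (h2 : IsPGroup 2 (QuaternionGroup n))
    {g : QuaternionGroup n} (hg : g ≠ 1) : a n ∈ Subgroup.zpowers g := by
  obtain ⟨h, hh, horder⟩ := h2.exists_mem_zpowers_orderOf_eq hg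
  rwa [← eq_a_of_orderOf_eq_two horder]

theorem a_one_ne_one (hn : 2 ≤ n) : (a 1 : QuaternionGroup n) ≠ 1 := by
  rw [one_def, Ne, a.injEq, ← Nat.cast_one, ZMod.natCast_eq_zero_iff]
  exact fun h ↦ absurd (Nat.le_of_dvd one_pos h) (by omega)

theorem a_one_ne_a (hn : 2 ≤ n) : (a 1 : QuaternionGroup n) ≠ a n := by
  rw [Ne, a.injEq, ← Nat.cast_one, ZMod.natCast_eq_natCast_iff', Nat.mod_eq_of_lt (by omega),
    Nat.mod_eq_of_lt (by omega)]
  omega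

theorem a_eq_one_or_eq_of_adj_xa [NeZero n] {i j : ZMod (2 * n)}
    (h : (enhancedPowerGraph (QuaternionGroup n)).Adj (a i) (xa j)) : a i = 1 ∨ a i = a n := by
  obtain ⟨-, w, hi, hj⟩ := h
  cases w with
  | a m => exact absurd hj (xa_notMem_zpowers_a m j)
  | xa m =>
    rcases mem_zpowers_xa_iff.mp hi with h | h | h | h
    · exact Or.inl h
    · exact Or.inr h
    · cases h
    · cases h

theorem castHom_eq_of_xa_mem_zpowers_xa [NeZero n] {i m : ZMod (2 * n)}
    (h : xa i ∈ Subgroup.zpowers (xa m)) :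
    ZMod.castHom (dvd_mul_left n 2) (ZMod n) i = ZMod.castHom (dvd_mul_left n 2) (ZMod n) m := by
  rcases mem_zpowers_xa_iff.mp h with h | h | h | h
  · cases h
  · cases h
  · rw [xa.inj h]
  · rw [xa.inj h, map_add, map_natCast, ZMod.natCast_self, add_zero]

theorem domVerts_enhancedPowerGraph (h2 : IsPGroup 2 (QuaternionGroup n)) (hn : 2 ≤ n) :
    (enhancedPowerGraph (QuaternionGroup n)).domVerts = {1, a n} := by
  have : NeZero n := ⟨by omega⟩
  ext v
  simp only [Set.mem_insert_iff, Set.mem_singleton_iff]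
  constructor
  · intro hv
    cases v with
    | a i => exact a_eq_one_or_eq_of_adj_xa (hv (xa 0) (by simp))
    | xa j =>
      rcases a_eq_one_or_eq_of_adj_xa (hv (a 1) (by simp)).symm with h | h
      · exact absurd h (a_one_ne_one hn)
      · exact absurd h (a_one_ne_a hn)
  · rintro (rfl | rfl) u hu
    · exact ⟨hu.symm, u, Subgroup.one_mem _, Subgroup.mem_zpowers u⟩
    · by_cases hu1 : u = 1
      · exact ⟨hu.symm, a n, Subgroup.mem_zpowers _, hu1 ▸ Subgroup.one_mem _⟩
      · exact ⟨hu.symm, u, a_mem_zpowers_of_ne_one h2 hu1, Subgroup.mem_zpowers u⟩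

def componentLabel : QuaternionGroup n → Option (ZMod n)
  | a _ => none
  | xa i => some (ZMod.castHom (dvd_mul_left n 2) (ZMod n) i)

theorem componentLabel_eq_of_adj [NeZero n] {x y : QuaternionGroup n}
    (hx : x ∉ ({1, a n} : Set (QuaternionGroup n)))
    (hy : y ∉ ({1, a n} : Set (QuaternionGroup n)))
    (h : (enhancedPowerGraph (QuaternionGroup n)).Adj x y) :
    componentLabel x = componentLabel y := by
  cases x with
  | a i =>
    cases y with
    | a j => rfl
    | xa j => exact absurd (a_eq_one_or_eq_of_adj_xa h) hx
  | xa i =>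
    cases y with
    | a j => exact absurd (a_eq_one_or_eq_of_adj_xa h.symm) hy
    | xa j =>
      obtain ⟨-, w, hi, hj⟩ := h
      cases w with
      | a m => exact absurd hi (xa_notMem_zpowers_a m i)
      | xa m =>
        simp only [componentLabel, castHom_eq_of_xa_mem_zpowers_xa hi,
          castHom_eq_of_xa_mem_zpowers_xa hj]

theorem adj_of_componentLabel_eq [NeZero n] {x y : QuaternionGroup n} (hxy : x ≠ y)
    (h : componentLabel x = componentLabel y) :
    (enhancedPowerGraph (QuaternionGroup n)).Adj x y := by
  refine ⟨hxy, ?_⟩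
  cases x with
  | a i =>
    cases y with
    | a j =>
      refine ⟨a 1, ?_, ?_⟩ <;> exact Subgroup.mem_zpowers_iff.mpr ⟨_, by
        rw [zpow_natCast, a_one_pow, ZMod.natCast_zmod_val]⟩
    | xa j => cases h
  | xa i =>
    cases y with
    | a j => cases h
    | xa j =>
      rcases ZMod.eq_or_eq_add_of_castHom_eq (Option.some.inj h) with rfl | rfl
      · exact absurd rfl hxy
      · exact ⟨xa i, Subgroup.mem_zpowers _, mem_zpowers_xa_iff.mpr (by simp)⟩

theorem natCard_connectedComponent_properEnhancedPowerGraph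
    (h2 : IsPGroup 2 (QuaternionGroup n)) (hn : 2 ≤ n) :
    Nat.card (properEnhancedPowerGraph (QuaternionGroup n)).ConnectedComponent = n + 1 := by
  have : NeZero n := ⟨by omega⟩
  have hdom := domVerts_enhancedPowerGraph h2 hn
  rw [natCard_connectedComponent_eq_of_reachable_iff (fun v ↦ componentLabel v.1) ?surj ?reach,
    Finite.card_option, Nat.card_zmod]
  case surj =>
    rintro (_ | r)
    · exact ⟨⟨a 1, by simp [hdom, a_one_ne_one hn, a_one_ne_a hn]⟩, rfl⟩
    · obtain ⟨i, rfl⟩ := ZMod.castHom_surjective (dvd_mul_left n 2) r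
      exact ⟨⟨xa i, by simp [hdom]⟩, rfl⟩
  case reach =>
    intro u v
    refine ⟨fun h ↦ h.eq_of_forall_adj (fun w ↦ componentLabel w.1) fun u v huv ↦
      componentLabel_eq_of_adj (hdom ▸ u.2) (hdom ▸ v.2) huv, fun h ↦ ?_⟩
    by_cases huv : u = v
    · exact huv ▸ Reachable.refl u
    · exact Adj.reachable (adj_of_componentLabel_eq (Subtype.coe_injective.ne huv) h)

end QuaternionGroup

/-- For `k ≥ 3`, the number of connected components of `G_E**(Q_{2^k})` is
`2^{k-2} + 1`. -/
theorem stmt_16 (k : ℕ) (hk : 3 ≤ k) :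
    Nat.card (properEnhancedPowerGraph (QuaternionGroup (2 ^ (k - 2)))).ConnectedComponent =
      2 ^ (k - 2) + 1 := by
  have hcard : Nat.card (QuaternionGroup (2 ^ (k - 2))) = 2 ^ k := by
    rw [Nat.card_eq_fintype_card, QuaternionGroup.card, show 4 = 2 ^ 2 from rfl, ← pow_add]
    congr 1
    omega
  exact QuaternionGroup.natCard_connectedComponent_properEnhancedPowerGraph
    (IsPGroup.of_card hcard) (Nat.le_self_pow (by omega) 2)
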